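/- arXiv:1611.02469 — 2 statements merged into one kernel-verified Lean document; each statement's English description precedes it below -/
import Mathlib

section
/- Let R be a commutative ring, I an ideal of R, and let P, Q be finitely generated projective R-modules. If φ : Q → P is an R-linear map such that the induced map Q/IQ → P/IP is a split monomorphism, then the localization φ_{1+I} : Q_{1+I} → P_{1+I} at the multiplicative set 1 + I is a split monomorphism. -/
/-- The multiplicative set `1 + I = {1 + a : a ∈ I}` attached to an ideal `I`. -/
def oneAddSet {R : Type*} [CommRing R] (I : Ideal R) : Submonoid R where
  carrier := {x | ∃ a ∈ I, x = 1 + a}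
  one_mem' := ⟨0, I.zero_mem, by ring⟩
  mul_mem' := by
    rintro x y ⟨a, ha, rfl⟩ ⟨b, hb, rfl⟩
    exact ⟨a + b + a * b, by
      exact add_mem (add_mem ha hb) (I.mul_mem_right b ha), by ring⟩

/-- Let `R` be a commutative ring, `I` an ideal of `R`, and `P`, `Q` finitely generated
projective `R`-modules.  If `φ : Q → P` is an `R`-linear map which is a split monomorphism
modulo `I` (i.e. the induced map `Q/IQ → P/IP` admits a left inverse), then the localized
map `φ_{1+I} : Q_{1+I} → P_{1+I}` is a split monomorphism. -/
theorem split_mono_of_split_mono_mod_ideal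
    (R P Q : Type) [CommRing R]
    [AddCommGroup P] [Module R P] [Module.Finite R P] [Module.Projective R P]
    [AddCommGroup Q] [Module R Q] [Module.Finite R Q] [Module.Projective R Q]
    (I : Ideal R) (φ : Q →ₗ[R] P)
    (hsplit : ∃ ψ : P →ₗ[R] Q ⧸ (I • ⊤ : Submodule R Q),
      ∀ q : Q, ψ (φ q) = Submodule.Quotient.mk q) :
    ∃ ψ' : LocalizedModule (oneAddSet I) P →ₗ[Localization (oneAddSet I)]
        LocalizedModule (oneAddSet I) Q,
      ψ' ∘ₗ (LocalizedModule.map (oneAddSet I) φ) = LinearMap.id := by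
  classical
  obtain ⟨ψ, hψ⟩ := hsplit
  set S := oneAddSet I with hS
  -- Lift ψ through the quotient map using projectivity of P
  obtain ⟨ψ₀, hψ₀⟩ := Module.projective_lifting_property
    (I • ⊤ : Submodule R Q).mkQ ψ (Submodule.mkQ_surjective _)
  set f : Q →ₗ[R] Q := ψ₀ ∘ₗ φ with hf
  have hfq : ∀ q : Q, f q - q ∈ (I • ⊤ : Submodule R Q) := by
    intro q
    have h1 : (I • ⊤ : Submodule R Q).mkQ (ψ₀ (φ q)) = ψ (φ q) := by
      rw [← hψ₀]; rfl
    have h2 : Submodule.Quotient.mk (f q) = (Submodule.Quotient.mk q : Q ⧸ (I • ⊤ : Submodule R Q)) := by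
      rw [show (Submodule.Quotient.mk (f q) : Q ⧸ (I • ⊤ : Submodule R Q)) =
        (I • ⊤ : Submodule R Q).mkQ (ψ₀ (φ q)) from rfl, h1, hψ q]
    rwa [Submodule.Quotient.eq] at h2
  -- the image of I is contained in the Jacobson radical of the localization
  have hunit : ∀ z ∈ Ideal.map (algebraMap R (Localization S)) I, IsUnit (z + 1) := by
    intro z hz
    obtain ⟨⟨a, s⟩, ha⟩ := (IsLocalization.mem_map_algebraMap_iff S _).mp hz
    obtain ⟨b, hb, hbs⟩ := s.2
    have hmem : ((s : R) + (a : R)) ∈ S := ⟨b + a, add_mem hb a.2, by rw [hbs]; ring⟩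
    have : (z + 1) * algebraMap R (Localization S) s
        = algebraMap R (Localization S) ((s : R) + (a : R)) := by
      rw [map_add, add_mul, one_mul, ha, add_comm]
    have hu : IsUnit ((z + 1) * algebraMap R (Localization S) s) := by
      rw [this]; exact IsLocalization.map_units _ (⟨_, hmem⟩ : S)
    exact isUnit_of_mul_isUnit_left hu
  have hIjac : Ideal.map (algebraMap R (Localization S)) I ≤ Ideal.jacobson ⊥ := by
    intro x hx
    rw [Ideal.mem_jacobson_bot]
    intro y
    exact hunit _ (Ideal.mul_mem_right y _ hx)
  haveI : Module.Finite (Localization S) (LocalizedModule S Q) :=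
    Module.Finite.of_isLocalizedModule S (LocalizedModule.mkLinearMap S Q)
  set f' : LocalizedModule S Q →ₗ[Localization S] LocalizedModule S Q :=
    LocalizedModule.map S f with hf'
  set I' : Ideal (Localization S) := Ideal.map (algebraMap R (Localization S)) I with hI'
  -- image of I•⊤ lands in I'•⊤
  have hIQ : ∀ y ∈ (I • ⊤ : Submodule R Q), ∀ s : S,
      LocalizedModule.mk y s ∈ I' • (⊤ : Submodule (Localization S) (LocalizedModule S Q)) := by
    intro y hy
    have h1 : LocalizedModule.mk y (1 : S) ∈
        I' • (⊤ : Submodule (Localization S) (LocalizedModule S Q)) := by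
      refine Submodule.smul_induction_on hy ?_ ?_
      · intro a ha q _
        have : (LocalizedModule.mk (a • q) (1 : S) :
            LocalizedModule S Q) = algebraMap R (Localization S) a • LocalizedModule.mk q 1 := by
          rw [← Localization.mk_one_eq_algebraMap, LocalizedModule.mk_smul_mk, one_mul]
        rw [this]
        exact Submodule.smul_mem_smul (Ideal.mem_map_of_mem _ ha) trivial
      · intro y₁ y₂ h₁ h₂
        have : (LocalizedModule.mk (y₁ + y₂) (1 : S) : LocalizedModule S Q)
            = LocalizedModule.mk y₁ 1 + LocalizedModule.mk y₂ 1 := by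
          rw [LocalizedModule.mk_add_mk]; simp
        rw [this]
        exact Submodule.add_mem _ h₁ h₂
    intro s
    have : (LocalizedModule.mk y s : LocalizedModule S Q)
        = Localization.mk 1 s • LocalizedModule.mk y 1 := by
      rw [LocalizedModule.mk_smul_mk, one_smul, mul_one]
    rw [this]
    exact Submodule.smul_mem _ _ h1
  -- surjectivity of f' via Nakayama
  have hle : (⊤ : Submodule (Localization S) (LocalizedModule S Q))
      ≤ LinearMap.range f' ⊔ I' • ⊤ := by
    rintro x -
    induction x using LocalizedModule.induction_on with
    | h q s =>
      have key : (LocalizedModule.mk q s : LocalizedModule S Q)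
          = f' (LocalizedModule.mk q s) - LocalizedModule.mk (f q - q) s := by
        rw [hf', LocalizedModule.map_mk]
        rw [show (LocalizedModule.mk (f q - q) s : LocalizedModule S Q)
          = LocalizedModule.mk (f q) s - LocalizedModule.mk q s from ?_]
        · abel
        · rw [eq_sub_iff_add_eq, LocalizedModule.mk_add_mk, ← LocalizedModule.mk_cancel_common_left s s (f q)]
          congr 1
          rw [smul_sub]
          abel
      rw [key]
      exact Submodule.sub_mem _
        (Submodule.mem_sup_left (LinearMap.mem_range_self _ _))
        (Submodule.mem_sup_right (hIQ _ (hfq q) s))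
  have hrange : LinearMap.range f' = ⊤ := by
    have h2 : I' • (⊤ : Submodule (Localization S) (LocalizedModule S Q))
        ≤ LinearMap.range f' :=
      Submodule.smul_le_of_le_smul_of_le_jacobson_bot Module.Finite.fg_top hIjac hle
    exact top_le_iff.mp (hle.trans (sup_le le_rfl h2))
  have hsurj : Function.Surjective f' := LinearMap.range_eq_top.mp hrange
  have hinj : Function.Injective f' :=
    OrzechProperty.injective_of_surjective_endomorphism f' hsurj
  let e : LocalizedModule S Q ≃ₗ[Localization S] LocalizedModule S Q :=
    LinearEquiv.ofBijective f' ⟨hinj, hsurj⟩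
  refine ⟨(e.symm : _ →ₗ[Localization S] _) ∘ₗ LocalizedModule.map S ψ₀, ?_⟩
  have hcomp : LocalizedModule.map S ψ₀ ∘ₗ LocalizedModule.map S φ = f' := by
    ext x
    induction x using LocalizedModule.induction_on with
    | h q s => simp [hf', hf, LocalizedModule.map_mk]
  ext x
  have : (LocalizedModule.map S ψ₀) ((LocalizedModule.map S φ) x) = f' x := by
    rw [← hcomp]; rfl
  simp only [LinearMap.comp_apply, LinearMap.coe_coe, this, LinearMap.id_apply]
  exact e.symm_apply_apply x
end

section
/- Let R be a commutative ring and f ∈ R[X] a special monic polynomial (monic with f(0) = 1). Then the composite R → R[X] → R[X]/(f) is an integral ring extension, and for any h ∈ 1 + 𝔪·R[X] with 𝔪 the maximal ideal of a local ring R, the elements h and f generate the unit ideal of R[X]. -/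
open Polynomial

/-- A polynomial is special monic if it is monic and has constant term `1`. -/
def IsSpecialMonic {R : Type*} [CommRing R] (f : R[X]) : Prop :=
  f.Monic ∧ f.coeff 0 = 1

/-- Let `R` be a commutative Noetherian local ring with maximal ideal `𝔪` and let
`f ∈ R[X]` be special monic.  Then the composite `R → R[X] → R[X]/(f)` is an integral
ring extension, and every `h ∈ 1 + 𝔪·R[X]` is comaximal with `f`, i.e. `h` and `f`
generate the unit ideal of `R[X]`. -/
theorem special_monic_integral_and_comaximal
    (R : Type) [CommRing R] [IsNoetherianRing R] [IsLocalRing R]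
    (f : R[X]) (hf : IsSpecialMonic f) :
    ((Ideal.Quotient.mk (Ideal.span {f})).comp (Polynomial.C : R →+* R[X])).IsIntegral ∧
    ∀ h : R[X], (∃ a ∈ (IsLocalRing.maximalIdeal R).map (Polynomial.C : R →+* R[X]),
        h = 1 + a) →
      Ideal.span {h, f} = (⊤ : Ideal R[X]) := by
  have hint : ((Ideal.Quotient.mk (Ideal.span {f})).comp (Polynomial.C : R →+* R[X])).IsIntegral := by
    have : Module.Finite R (AdjoinRoot f) := (AdjoinRoot.powerBasis' hf.1).finite
    have : Algebra.IsIntegral R (AdjoinRoot f) := Algebra.IsIntegral.of_finite _ _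
    exact this.isIntegral
  refine ⟨hint, ?_⟩
  rintro h ⟨a, ha, rfl⟩
  set π := Ideal.Quotient.mk (Ideal.span {f}) with hπ
  set φ := π.comp (Polynomial.C : R →+* R[X]) with hφ
  -- the image of `𝔪` in the quotient lies in the Jacobson radical
  have hle : (IsLocalRing.maximalIdeal R).map φ ≤
      Ideal.jacobson (⊥ : Ideal (R[X] ⧸ Ideal.span {f})) := by
    rw [Ideal.jacobson]
    refine le_sInf ?_
    rintro J ⟨-, hJ⟩
    rw [Ideal.map_le_iff_le_comap]
    have : (J.comap φ).IsMaximal :=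
      Ideal.isMaximal_comap_of_isIntegral_of_isMaximal' φ hint J
    exact le_of_eq (IsLocalRing.eq_maximalIdeal this).symm
  have hmem : π a ∈ Ideal.jacobson (⊥ : Ideal (R[X] ⧸ Ideal.span {f})) := by
    apply hle
    rw [hφ, ← Ideal.map_map]
    exact Ideal.mem_map_of_mem _ ha
  have hu : IsUnit (π (1 + a)) := by
    apply Ideal.isUnit_of_sub_one_mem_jacobson_bot
    rwa [map_add, map_one, add_sub_cancel_left]
  obtain ⟨u, hu⟩ := hu
  obtain ⟨g, hg⟩ := Ideal.Quotient.mk_surjective (↑u⁻¹ : R[X] ⧸ Ideal.span {f})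
  have key : (1 + a) * g - 1 ∈ Ideal.span ({f} : Set R[X]) := by
    rw [← Ideal.Quotient.eq_zero_iff_mem]
    rw [map_sub, map_mul, map_one, ← hπ, hg, ← hu, u.mul_inv, sub_self]
  rw [Ideal.eq_top_iff_one]
  have h1 : (1 + a) * g ∈ Ideal.span ({1 + a, f} : Set R[X]) :=
    Ideal.mul_mem_right _ _ (Ideal.subset_span (by simp))
  have h2 : (1 + a) * g - 1 ∈ Ideal.span ({1 + a, f} : Set R[X]) := by
    refine Ideal.span_mono ?_ key
    intro x hx; simp_all
  have := Ideal.sub_mem _ h1 h2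
  simpa using this
end
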